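/- Let $\overline{\chi} > 0$, $k_0, s_0 > 0$, and $(\mu_j)_{j\ge1}$ positive reals with $0 < c \le \mu_j \le M$ for all $j$. Let $(\xi_j)$ be independent random variables with $\mathbb{E}[\xi_j] = \mu_j\overline{\chi}$ and uniformly bounded variances. Define $\hat{\chi}_i = \frac{k_0 s_0 + s_0\sum_{j=1}^{i-1}\xi_j}{1 + s_0\sum_{j=1}^{i-1}\mu_j}$. Then $\mathbb{E}[(\hat{\chi}_i - \overline{\chi})^2] \to 0$ as $i \to \infty$, i.e., $\hat{\chi}_i$ converges to $\overline{\chi}$ in mean square. -/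

import Mathlib

/-!
The estimate is an affine function of the partial sum `Sᵢ = ∑_{j<i} ξⱼ` with slope `s₀ / Dᵢ`,
where `Dᵢ = 1 + s₀ ∑_{j<i} μⱼ ≥ 1 + s₀ c i`. Its mean-square error is its variance
`(s₀ / Dᵢ)² Var Sᵢ` plus its squared bias, and the bias is exactly `(k₀ s₀ - χ) / Dᵢ`.
By independence `Var Sᵢ ≤ i V ≤ (V / c) ∑_{j<i} μⱼ`, so both terms are `O(1 / Dᵢ)`,
and `Dᵢ → ∞`.
-/

open Finset Filter MeasureTheory ProbabilityTheory Topology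

section MeanSquareError

variable {Ω : Type*} [MeasurableSpace Ω] {P : Measure Ω}

lemma variance_sum_le_card_mul {ι : Type*} {ξ : ι → Ω → ℝ} (hL2 : ∀ j, MemLp (ξ j) 2 P)
    (hindep : iIndepFun ξ P) {V : ℝ} (hvar : ∀ j, variance (ξ j) P ≤ V) (s : Finset ι) :
    variance (∑ j ∈ s, ξ j) P ≤ #s * V := by
  rw [IndepFun.variance_sum (fun j _ => hL2 j) fun a _ b _ hab => hindep.indepFun hab]
  simpa using sum_le_sum fun j (_ : j ∈ s) => hvar j

variable [IsProbabilityMeasure P]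

lemma integral_sub_const_sq_eq_variance_add {X : Ω → ℝ} (hX : MemLp X 2 P) (t : ℝ) :
    ∫ ω, (X ω - t) ^ 2 ∂P = variance X P + (P[X] - t) ^ 2 := by
  have hXt : MemLp (fun ω => X ω - t) 2 P := hX.sub (memLp_const t)
  have hmean : P[fun ω => X ω - t] = P[X] - t := by
    rw [integral_sub (hX.integrable one_le_two) (integrable_const t)]
    simp
  have := variance_eq_sub hXt
  rw [variance_sub_const hX.aestronglyMeasurable, hmean] at this
  simp only [Pi.pow_apply] at this
  linarith

lemma integral_const_mul_add_sub_sq_eq {X : Ω → ℝ} (hX : MemLp X 2 P) (a b t : ℝ) :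
    ∫ ω, (a * X ω + b - t) ^ 2 ∂P = a ^ 2 * variance X P + (a * P[X] + b - t) ^ 2 := by
  have haX : MemLp (fun ω => a * X ω) 2 P := hX.const_mul a
  have hY : MemLp (fun ω => a * X ω + b) 2 P := haX.add (memLp_const b)
  rw [integral_sub_const_sq_eq_variance_add hY t,
    variance_add_const haX.aestronglyMeasurable, variance_const_mul,
    integral_add (haX.integrable one_le_two) (integrable_const b), integral_const_mul]
  simp

lemma integral_estimate_sub_sq_eq {ι : Type*} {ξ : ι → Ω → ℝ} (hL2 : ∀ j, MemLp (ξ j) 2 P)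
    {μ : ι → ℝ} {χ : ℝ} (hmean : ∀ j, P[ξ j] = μ j * χ) (k s : ℝ) (t : Finset ι)
    (hD : 1 + s * ∑ j ∈ t, μ j ≠ 0) :
    ∫ ω, ((k * s + s * ∑ j ∈ t, ξ j ω) / (1 + s * ∑ j ∈ t, μ j) - χ) ^ 2 ∂P =
      (s / (1 + s * ∑ j ∈ t, μ j)) ^ 2 * variance (∑ j ∈ t, ξ j) P +
        ((k * s - χ) / (1 + s * ∑ j ∈ t, μ j)) ^ 2 := by
  set D := 1 + s * ∑ j ∈ t, μ j
  have hS : MemLp (∑ j ∈ t, ξ j) 2 P := memLp_finsetSum' t fun j _ => hL2 j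
  have hSmean : P[∑ j ∈ t, ξ j] = (∑ j ∈ t, μ j) * χ := by
    simp only [Finset.sum_apply]
    rw [integral_finsetSum t fun j _ => (hL2 j).integrable one_le_two, sum_mul]
    exact sum_congr rfl fun j _ => hmean j
  have hbias : s / D * ((∑ j ∈ t, μ j) * χ) + k * s / D - χ = (k * s - χ) / D := by
    field_simp
    ring
  calc ∫ ω, ((k * s + s * ∑ j ∈ t, ξ j ω) / D - χ) ^ 2 ∂P
      = ∫ ω, (s / D * (∑ j ∈ t, ξ j) ω + k * s / D - χ) ^ 2 ∂P := by
        congr with ω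
        rw [Finset.sum_apply]
        ring
    _ = (s / D) ^ 2 * variance (∑ j ∈ t, ξ j) P + ((k * s - χ) / D) ^ 2 := by
        rw [integral_const_mul_add_sub_sq_eq hS, hSmean, hbias]

end MeanSquareError

/-- Both terms are `O(1 / (1 + s m))`. -/
lemma tendsto_sq_div_mul_add_sq_div {α : Type*} {l : Filter α} {m v : α → ℝ} {s K b : ℝ}
    (hs : 0 < s) (hK : 0 ≤ K) (hm0 : ∀ i, 0 ≤ m i) (hm : Tendsto m l atTop)
    (hv0 : ∀ i, 0 ≤ v i) (hv : ∀ i, v i ≤ K * m i) :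
    Tendsto (fun i => (s / (1 + s * m i)) ^ 2 * v i + (b / (1 + s * m i)) ^ 2) l (𝓝 0) := by
  have hD : Tendsto (fun i => 1 + s * m i) l atTop :=
    tendsto_atTop_add_const_left l 1 (hm.const_mul_atTop hs)
  have hbias : Tendsto (fun i => (b / (1 + s * m i)) ^ 2) l (𝓝 0) := by
    simpa using (tendsto_const_nhds.div_atTop hD).pow 2
  have hvar_le : ∀ i, (s / (1 + s * m i)) ^ 2 * v i ≤ K * (s / (1 + s * m i)) := by
    intro i
    have hDpos : 0 < 1 + s * m i := by have := hm0 i; positivity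
    calc (s / (1 + s * m i)) ^ 2 * v i ≤ (s / (1 + s * m i)) ^ 2 * (K * m i) := by
          gcongr
          exact hv i
      _ = K * (s / (1 + s * m i)) * (s * m i / (1 + s * m i)) := by ring
      _ ≤ K * (s / (1 + s * m i)) * 1 := by
          gcongr
          exact (div_le_one hDpos).2 (by linarith)
      _ = K * (s / (1 + s * m i)) := mul_one _
  have hvar : Tendsto (fun i => (s / (1 + s * m i)) ^ 2 * v i) l (𝓝 0) :=
    squeeze_zero (fun i => mul_nonneg (sq_nonneg _) (hv0 i)) hvar_le
      (by simpa using (tendsto_const_nhds.div_atTop hD).const_mul K)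
  simpa using hvar.add hbias

theorem external_factor_estimate_tendsto_in_mean_square_general
    {Ω : Type*} [MeasurableSpace Ω] (P : Measure Ω) [IsProbabilityMeasure P]
    (χ k₀ s₀ c V : ℝ) (hs : 0 < s₀) (hc : 0 < c)
    (μ : ℕ → ℝ) (hμc : ∀ j, c ≤ μ j)
    (ξ : ℕ → Ω → ℝ)
    (hL2 : ∀ j, MemLp (ξ j) 2 P)
    (hindep : iIndepFun ξ P)
    (hmean : ∀ j, ∫ ω, ξ j ω ∂P = μ j * χ)
    (hvar : ∀ j, variance (ξ j) P ≤ V) :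
    Tendsto (fun i => ∫ ω,
        ((k₀ * s₀ + s₀ * ∑ j ∈ range i, ξ j ω) /
          (1 + s₀ * ∑ j ∈ range i, μ j) - χ) ^ 2 ∂P) atTop (nhds 0) := by
  have hm_ge : ∀ i : ℕ, c * i ≤ ∑ j ∈ range i, μ j := fun i => by
    simpa [mul_comm] using sum_le_sum fun j (_ : j ∈ range i) => hμc j
  have hm0 : ∀ i : ℕ, 0 ≤ ∑ j ∈ range i, μ j := fun i =>
    sum_nonneg fun j _ => hc.le.trans (hμc j)
  have hm : Tendsto (fun i : ℕ => ∑ j ∈ range i, μ j) atTop atTop :=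
    tendsto_atTop_mono hm_ge (tendsto_natCast_atTop_atTop.const_mul_atTop hc)
  have hV : 0 ≤ V := (variance_nonneg _ _).trans (hvar 0)
  have hvar_le : ∀ i : ℕ, variance (∑ j ∈ range i, ξ j) P ≤ V / c * ∑ j ∈ range i, μ j := by
    intro i
    calc variance (∑ j ∈ range i, ξ j) P ≤ i * V := by
          simpa using variance_sum_le_card_mul hL2 hindep hvar (range i)
      _ ≤ V / c * ∑ j ∈ range i, μ j := by
          rw [div_mul_eq_mul_div, le_div_iff₀ hc]
          nlinarith [hm_ge i]
  have hD : ∀ i : ℕ, 1 + s₀ * ∑ j ∈ range i, μ j ≠ 0 := fun i =>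
    (add_pos_of_pos_of_nonneg one_pos (mul_nonneg hs.le (hm0 i))).ne'
  simp_rw [integral_estimate_sub_sq_eq hL2 hmean k₀ s₀ _ (hD _)]
  exact tendsto_sq_div_mul_add_sq_div hs (by positivity) hm0 hm (fun _ => variance_nonneg _ _)
    hvar_le

theorem external_factor_estimate_tendsto_in_mean_square
    {Ω : Type*} [MeasurableSpace Ω] (P : Measure Ω) [IsProbabilityMeasure P]
    (χ k₀ s₀ c M V : ℝ) (hχ : 0 < χ) (hk : 0 < k₀) (hs : 0 < s₀) (hc : 0 < c)
    (μ : ℕ → ℝ) (hμc : ∀ j, c ≤ μ j) (hμM : ∀ j, μ j ≤ M)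
    (ξ : ℕ → Ω → ℝ) (hmeas : ∀ j, Measurable (ξ j))
    (hL2 : ∀ j, MemLp (ξ j) 2 P)
    (hindep : iIndepFun ξ P)
    (hmean : ∀ j, ∫ ω, ξ j ω ∂P = μ j * χ)
    (hvar : ∀ j, variance (ξ j) P ≤ V) :
    Tendsto (fun i => ∫ ω,
        ((k₀ * s₀ + s₀ * ∑ j ∈ range i, ξ j ω) /
          (1 + s₀ * ∑ j ∈ range i, μ j) - χ) ^ 2 ∂P) atTop (nhds 0) :=
  external_factor_estimate_tendsto_in_mean_square_general P χ k₀ s₀ c V hs hc μ hμc ξ hL2 hindep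
    hmean hvar
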